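/- arXiv:2209.05332 — 6 statements merged into one kernel-verified Lean document; each statement's English description precedes it below -/
import Mathlib

section
/- Let P = (ρ_{uv}) be an N×N symmetric matrix with unit diagonal, nonnegative off-diagonal entries, satisfying the four-point condition, and let I be the identity matrix. Then for every x ∈ [0,1], the matrix P^{(x)} = x·I + (1−x)·P has unit diagonal, nonnegative entries, and also satisfies the four-point condition. -/
/-- If a symmetric matrix `P` with unit diagonal and nonnegative
entries satisfies the four-point condition, then so does
`P⁽ˣ⁾ = x·I + (1−x)·P` for every `x ∈ [0,1]`, and `P⁽ˣ⁾` has unit diagonal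
and nonnegative entries. -/
theorem stmt_3 (N : ℕ) (hN : 2 ≤ N) (P : Matrix (Fin N) (Fin N) ℝ)
    (hsymm : P.IsSymm)
    (hdiag : ∀ u, P u u = 1)
    (hnonneg : ∀ u v, 0 ≤ P u v)
    (h4pt : ∀ u v s t : Fin N,
      (P u v * P s t = P u s * P v t ∧ P u v * P s t ≤ P u t * P v s) ∨
      (P u v * P s t = P u t * P v s ∧ P u v * P s t ≤ P u s * P v t) ∨
      (P u s * P v t = P u t * P v s ∧ P u s * P v t ≤ P u v * P s t))
    (x : ℝ) (hx : x ∈ Set.Icc (0:ℝ) 1) :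
    (∀ u, (x • (1 : Matrix (Fin N) (Fin N) ℝ) + (1 - x) • P) u u = 1) ∧
    (∀ u v, 0 ≤ (x • (1 : Matrix (Fin N) (Fin N) ℝ) + (1 - x) • P) u v) ∧
    (∀ u v s t : Fin N,
      let Q := x • (1 : Matrix (Fin N) (Fin N) ℝ) + (1 - x) • P
      (Q u v * Q s t = Q u s * Q v t ∧ Q u v * Q s t ≤ Q u t * Q v s) ∨
      (Q u v * Q s t = Q u t * Q v s ∧ Q u v * Q s t ≤ Q u s * Q v t) ∨
      (Q u s * Q v t = Q u t * Q v s ∧ Q u s * Q v t ≤ Q u v * Q s t)) := by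
  obtain ⟨hx0, hx1⟩ := hx
  have hc0 : (0:ℝ) ≤ 1 - x := by linarith
  have hc1 : (1:ℝ) - x ≤ 1 := by linarith
  have sym : ∀ a b, P b a = P a b := fun a b => hsymm.apply a b
  have hle1 : ∀ u v, P u v ≤ 1 := by
    intro u v
    rcases h4pt u v u v with ⟨h1, h2⟩ | ⟨h1, h2⟩ | ⟨h1, h2⟩ <;>
      simp only [hdiag, sym] at * <;> nlinarith [hnonneg u v]
  have hkey : ∀ u s t, P u s * P u t ≤ P s t := by
    intro u s t
    rcases h4pt u u s t with ⟨h1, h2⟩ | ⟨h1, h2⟩ | ⟨h1, h2⟩ <;>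
      simp only [hdiag, sym, one_mul] at * <;> nlinarith [hnonneg u s, hnonneg u t]
  -- main multiplicative step : (1-x)q·(1-x) ≤ p  when 0 ≤ q ≤ p
  have main : ∀ p q : ℝ, 0 ≤ q → q ≤ p → (1-x)*((1-x)*q) ≤ (1-x)*p := by
    intro p q hq hqp
    nlinarith [mul_nonneg hc0 (sub_nonneg.mpr hqp),
      mul_nonneg (mul_nonneg hc0 hq) (by linarith : (0:ℝ) ≤ 1 - (1-x))]
  have sq1 : ∀ a b : Fin N, (1-x)*P a b * ((1-x)*P a b) ≤ 1 := by
    intro a b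
    have h1 : 0 ≤ (1-x)*P a b := mul_nonneg hc0 (hnonneg a b)
    have h2 : (1-x)*P a b ≤ 1 := by nlinarith [hle1 a b, hnonneg a b]
    nlinarith
  have hQ : ∀ a b, (x • (1 : Matrix (Fin N) (Fin N) ℝ) + (1 - x) • P) a b
      = if a = b then 1 else (1 - x) * P a b := by
    intro a b
    by_cases h : a = b
    · subst h
      simp [Matrix.add_apply, Matrix.smul_apply, Matrix.one_apply_eq, hdiag, smul_eq_mul]
    · simp [Matrix.add_apply, Matrix.smul_apply, Matrix.one_apply_ne h, smul_eq_mul, h]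
  have e : ∀ a : Fin N, (if a = a then (1:ℝ) else (1 - x) * P a a) = 1 :=
    fun a => if_pos rfl
  refine ⟨fun u => by simp [hQ], fun u v => ?_, ?_⟩
  · rw [hQ]
    split
    · norm_num
    · exact mul_nonneg hc0 (hnonneg u v)
  · intro u v s t
    dsimp only
    simp only [hQ]
    by_cases h1 : u = v
    · subst h1
      by_cases h2 : s = t
      · subst h2
        by_cases h3 : u = s
        · subst h3
          simp only [e, if_true]
          exact Or.inl ⟨by trivial, le_refl _⟩
        · simp only [e, if_true, if_neg h3, if_neg (fun h : s = u => h3 h.symm)]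
          exact Or.inr (Or.inr ⟨by trivial, by nlinarith [sq1 u s]⟩)
      · by_cases h3 : u = s
        · subst h3
          simp only [e, if_true, if_neg (fun h : u = t => h2 h), if_neg (fun h : t = u => h2 h.symm),
            if_neg h2]
          exact Or.inl ⟨by trivial, le_of_eq (by ring)⟩
        · by_cases h4 : u = t
          · subst h4
            simp only [e, if_true, if_neg h3, if_neg h2, if_neg (fun h : s = u => h3 h.symm)]
            refine Or.inl ⟨?_, ?_⟩
            · rw [sym u s]; ring
            · rw [sym u s]
          · -- pair u = v only
            simp only [e, if_true, if_neg h2, if_neg h3, if_neg h4]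
            refine Or.inr (Or.inr ⟨by ring, ?_⟩)
            have h := main (P s t) (P u s * P u t)
              (mul_nonneg (hnonneg u s) (hnonneg u t)) (hkey u s t)
            nlinarith [h]
    · by_cases h2 : s = t
      · subst h2
        by_cases h3 : s = u
        · subst h3
          simp only [e, if_true, if_neg h1, if_neg (fun h : v = s => h1 h.symm)]
          refine Or.inl ⟨?_, ?_⟩
          · rw [sym s v]; ring
          · rw [sym s v]; exact le_of_eq (by ring)
        · by_cases h4 : s = v
          · subst h4
            simp only [e, if_true, if_neg h1, if_neg (fun h : u = s => h3 h.symm)]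
            exact Or.inl ⟨by trivial, le_of_eq (by ring)⟩
          · -- pair s = t only
            simp only [e, if_true, if_neg h1, if_neg (fun h : u = s => h3 h.symm),
              if_neg (fun h : v = s => h4 h.symm)]
            refine Or.inr (Or.inr ⟨by trivial, ?_⟩)
            have hk := hkey s u v
            rw [sym u s, sym v s] at hk
            have h := main (P u v) (P u s * P v s)
              (mul_nonneg (hnonneg u s) (hnonneg v s)) hk
            nlinarith [h]
      · by_cases h3 : u = s
        · subst h3
          by_cases h4 : v = t
          · subst h4
            simp only [e, if_true, if_neg h1, if_neg (fun h : v = u => h1 h.symm)]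
            refine Or.inr (Or.inl ⟨?_, ?_⟩)
            · rw [sym v u]
            · nlinarith [sq1 u v]
          · -- pair u = s only
            simp only [e, if_true, if_neg h1, if_neg h2, if_neg h4,
              if_neg (fun h : u = t => h2 h), if_neg (fun h : v = u => h1 h.symm)]
            refine Or.inr (Or.inl ⟨?_, ?_⟩)
            · rw [sym v u]; ring
            · have h := main (P v t) (P u v * P u t)
                (mul_nonneg (hnonneg u v) (hnonneg u t)) (hkey u v t)
              nlinarith [h]
        · by_cases h4 : u = t
          · subst h4
            by_cases h5 : v = s
            · subst h5
              simp only [e, if_true, if_neg h1, if_neg (fun h : v = u => h1 h.symm)]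
              refine Or.inl ⟨by trivial, ?_⟩
              rw [sym v u]
              nlinarith [sq1 v u]
            · -- pair u = t only
              simp only [e, if_true, if_neg h1, if_neg h2, if_neg h5, if_neg h3,
                if_neg (fun h : s = u => h3 h.symm), if_neg (fun h : v = u => h1 h.symm),
                if_neg (fun h : v = s => h5 h)]
              refine Or.inl ⟨?_, ?_⟩
              · rw [sym u s, sym u v]; ring
              · rw [sym u s]
                have h := main (P v s) (P u v * P u s)
                  (mul_nonneg (hnonneg u v) (hnonneg u s)) (hkey u v s)
                nlinarith [h]
          · by_cases h5 : v = s
            · subst h5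
              -- pair v = s only
              simp only [e, if_true, if_neg h1, if_neg h2, if_neg h4]
              refine Or.inl ⟨by trivial, ?_⟩
              have hk := hkey v u t
              rw [sym u v] at hk
              have h := main (P u t) (P u v * P v t)
                (mul_nonneg (hnonneg u v) (hnonneg v t)) hk
              nlinarith [h]
            · by_cases h6 : v = t
              · subst h6
                -- pair v = t only
                simp only [e, if_true, if_neg h1, if_neg h2, if_neg h3, if_neg h4, if_neg h5,
                  if_neg (fun h : s = v => h5 h.symm)]
                refine Or.inr (Or.inl ⟨?_, ?_⟩)
                · rw [sym v s]
                · rw [show P s v = P v s from sym v s]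
                  have hk := hkey v u s
                  rw [sym u v] at hk
                  have h := main (P u s) (P u v * P v s)
                    (mul_nonneg (hnonneg u v) (hnonneg v s)) hk
                  nlinarith [h]
              · -- all distinct
                simp only [if_neg h1, if_neg h2, if_neg h3, if_neg h4, if_neg h5, if_neg h6]
                rcases h4pt u v s t with ⟨e1, e2⟩ | ⟨e1, e2⟩ | ⟨e1, e2⟩
                · exact Or.inl ⟨by linear_combination (1-x)^2 * e1,
                    by nlinarith [mul_nonneg (mul_nonneg hc0 hc0) (sub_nonneg.mpr e2)]⟩
                · exact Or.inr (Or.inl ⟨by linear_combination (1-x)^2 * e1,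
                    by nlinarith [mul_nonneg (mul_nonneg hc0 hc0) (sub_nonneg.mpr e2)]⟩)
                · exact Or.inr (Or.inr ⟨by linear_combination (1-x)^2 * e1,
                    by nlinarith [mul_nonneg (mul_nonneg hc0 hc0) (sub_nonneg.mpr e2)]⟩)
end

section
/- The subset of symmetric positive definite matrices satisfying conditions (R1), (R2), (R3) is star-shaped with respect to the identity matrix: if P satisfies (R1)-(R3) then so does xI + (1−x)P for all x ∈ [0,1], and these matrices remain positive definite. Consequently this subset is contractible. -/
/-- The conditions (R1) unit diagonal, (R2) four-point condition,
(R3) nonnegative entries, for a symmetric positive definite matrix. -/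
def WaldCond {N : ℕ} (P : Matrix (Fin N) (Fin N) ℝ) : Prop :=
  P.IsSymm ∧ P.PosDef ∧
  (∀ u, P u u = 1) ∧
  (∀ u v s t : Fin N,
    (P u v * P s t = P u s * P v t ∧ P u v * P s t ≤ P u t * P v s) ∨
    (P u v * P s t = P u t * P v s ∧ P u v * P s t ≤ P u s * P v t) ∨
    (P u s * P v t = P u t * P v s ∧ P u s * P v t ≤ P u v * P s t)) ∧
  (∀ u v, 0 ≤ P u v)


def FourPt {N : ℕ} (P : Matrix (Fin N) (Fin N) ℝ) : Prop :=
  ∀ u v s t : Fin N,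
    (P u v * P s t = P u s * P v t ∧ P u v * P s t ≤ P u t * P v s) ∨
    (P u v * P s t = P u t * P v s ∧ P u v * P s t ≤ P u s * P v t) ∨
    (P u s * P v t = P u t * P v s ∧ P u s * P v t ≤ P u v * P s t)

private lemma aux1 {c A B : ℝ} (hc0 : 0 ≤ c) (hc1 : c ≤ 1) (hA : 0 ≤ A) (hAB : A ≤ B) :
    c * c * A ≤ c * B := by
  nlinarith [mul_nonneg hc0 (sub_nonneg.mpr hAB),
    mul_nonneg (mul_nonneg hc0 (sub_nonneg.mpr hc1)) hA]

private lemma aux2 {c A : ℝ} (hc0 : 0 ≤ c) (hc1 : c ≤ 1) (hA0 : 0 ≤ A) (hA1 : A ≤ 1) :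
    c * A * (c * A) ≤ 1 := by
  have h1 : 0 ≤ c * A := mul_nonneg hc0 hA0
  have h2 : c * A ≤ 1 := by nlinarith
  nlinarith

lemma blend_fourpoint {N : ℕ} (P Q : Matrix (Fin N) (Fin N) ℝ) (c : ℝ)
    (hc0 : 0 ≤ c) (hc1 : c ≤ 1)
    (hsymE : ∀ a b, P a b = P b a) (hdiag : ∀ a, P a a = 1)
    (hnn : ∀ a b, 0 ≤ P a b) (hle1 : ∀ a b, P a b ≤ 1)
    (h4 : FourPt P)
    (hQ : ∀ a b, Q a b = if a = b then 1 else c * P a b) :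
    FourPt Q := by
  intro u v s t
  obtain rfl | huv := eq_or_ne u v
  · obtain rfl | hst := eq_or_ne s t
    · obtain rfl | hus := eq_or_ne u s
      · simp [hQ]
      · refine Or.inr (Or.inr ⟨by ring, ?_⟩)
        simp only [hQ, if_neg hus, eq_self_iff_true, if_true, one_mul]
        exact aux2 hc0 hc1 (hnn u s) (hle1 u s)
    · obtain rfl | hus := eq_or_ne u s
      · have hut : u ≠ t := hst
        exact Or.inl ⟨by simp [hQ, hut]; try ring, le_of_eq (by simp [hQ, hut]; try ring)⟩
      · obtain rfl | hut := eq_or_ne u t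
        · refine Or.inl ⟨?_, le_of_eq ?_⟩ <;>
            (simp [hQ, hus, (Ne.symm hus : s ≠ u), hsymE s u]; try ring)
        · -- (u,u,s,t), u,s,t distinct : T2 = T3 = c²PusPut ≤ T1 = c*Pst
          have key : P u s * P u t ≤ P s t := by
            have H := h4 u u s t
            simp only [hdiag, one_mul] at H
            rcases H with ⟨h1, h2⟩ | ⟨h1, h2⟩ | ⟨h1, h2⟩ <;> linarith [mul_comm (P u t) (P u s)]
          refine Or.inr (Or.inr ⟨by ring, ?_⟩)
          simp only [hQ, if_neg hus, if_neg hut, if_neg hst, eq_self_iff_true, if_true, one_mul]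
          nlinarith [aux1 hc0 hc1 (mul_nonneg (hnn u s) (hnn u t)) key]
  · obtain rfl | hst := eq_or_ne s t
    · obtain rfl | hus := eq_or_ne u s
      · refine Or.inl ⟨?_, le_of_eq ?_⟩ <;>
          (simp [hQ, huv, (Ne.symm huv : _ ≠ u), hsymE _ u]; try ring)
      · obtain rfl | hvs := eq_or_ne v s
        · refine Or.inl ⟨?_, le_of_eq ?_⟩ <;> (simp [hQ, huv]; try ring)
        · -- (u,v,s,s) distinct : T2 = T3 = c²PusPvs ≤ T1 = c*Puv
          have key : P u s * P v s ≤ P u v := by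
            have H := h4 u v s s
            simp only [hdiag, mul_one] at H
            rcases H with ⟨h1, h2⟩ | ⟨h1, h2⟩ | ⟨h1, h2⟩ <;> linarith [mul_comm (P u s) (P v s)]
          refine Or.inr (Or.inr ⟨by ring, ?_⟩)
          simp only [hQ, if_neg huv, if_neg hus, if_neg hvs, eq_self_iff_true, if_true, mul_one]
          nlinarith [aux1 hc0 hc1 (mul_nonneg (hnn u s) (hnn v s)) key]
    · obtain rfl | hus := eq_or_ne u s
      · obtain rfl | hvt := eq_or_ne v t
        · -- (u,v,u,v) : T1 = T3 = c²Puv² ≤ T2 = 1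
          refine Or.inr (Or.inl ⟨?_, ?_⟩) <;>
            simp only [hQ, if_neg huv, if_neg (Ne.symm huv), hsymE v u,
              eq_self_iff_true, if_true, one_mul] <;>
          first | ring1 | nlinarith [aux2 hc0 hc1 (hnn u v) (hle1 u v)]
        · -- (u,v,u,t) : T1 = T3 = c²PuvPut ≤ T2 = c*Pvt
          have key : P u v * P u t ≤ P v t := by
            have H := h4 u v u t
            simp only [hdiag, one_mul, hsymE v u] at H
            rcases H with ⟨h1, h2⟩ | ⟨h1, h2⟩ | ⟨h1, h2⟩ <;> linarith [mul_comm (P u t) (P u v)]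
          refine Or.inr (Or.inl ⟨?_, ?_⟩) <;>
            simp only [hQ, if_neg huv, if_neg hst, if_neg hvt, if_neg (Ne.symm huv), hsymE v u,
              eq_self_iff_true, if_true, one_mul] <;>
          first | ring1 | nlinarith [aux1 hc0 hc1 (mul_nonneg (hnn u v) (hnn u t)) key]
      · obtain rfl | hut := eq_or_ne u t
        · obtain rfl | hvs := eq_or_ne v s
          · -- (u,v,v,u) : T1 = T2 = c²Puv² ≤ T3 = 1
            refine Or.inl ⟨?_, ?_⟩ <;>
              simp only [hQ, if_neg huv, if_neg (Ne.symm huv), hsymE v u,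
                eq_self_iff_true, if_true, one_mul] <;>
            first | ring1 | nlinarith [aux2 hc0 hc1 (hnn u v) (hle1 u v)]
          · -- (u,v,s,u) : T1 = T2 = c²PuvPus ≤ T3 = c*Pvs
            have key : P u v * P u s ≤ P v s := by
              have H := h4 u v s u
              simp only [hdiag, one_mul, hsymE s u, hsymE v u] at H
              rcases H with ⟨h1, h2⟩ | ⟨h1, h2⟩ | ⟨h1, h2⟩ <;>
                linarith [mul_comm (P u s) (P u v)]
            refine Or.inl ⟨?_, ?_⟩ <;>
              simp only [hQ, if_neg huv, if_neg hus, if_neg hvs, if_neg (Ne.symm hus),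
                if_neg (Ne.symm huv), hsymE s u, hsymE v u, eq_self_iff_true, if_true, one_mul] <;>
            first | ring1 | nlinarith [aux1 hc0 hc1 (mul_nonneg (hnn u v) (hnn u s)) key]
        · obtain rfl | hvs := eq_or_ne v s
          · -- (u,v,v,t) : T1 = T2 = c²PuvPvt ≤ T3 = c*Put
            have key : P u v * P v t ≤ P u t := by
              have H := h4 u v v t
              simp only [hdiag, one_mul, mul_one] at H
              rcases H with ⟨h1, h2⟩ | ⟨h1, h2⟩ | ⟨h1, h2⟩ <;> linarith
            refine Or.inl ⟨rfl, ?_⟩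
            simp only [hQ, if_neg huv, if_neg hst, if_neg hut,
              eq_self_iff_true, if_true, one_mul, mul_one]
            nlinarith [aux1 hc0 hc1 (mul_nonneg (hnn u v) (hnn v t)) key]
          · obtain rfl | hvt := eq_or_ne v t
            · -- (u,v,s,v) : T1 = T3 = c²PuvPsv ≤ T2 = c*Pus
              have key : P u v * P s v ≤ P u s := by
                have H := h4 u v s v
                simp only [hdiag, one_mul, mul_one, hsymE v s] at H
                rcases H with ⟨h1, h2⟩ | ⟨h1, h2⟩ | ⟨h1, h2⟩ <;>
                  linarith [mul_comm (P u v) (P s v)]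
              refine Or.inr (Or.inl ⟨?_, ?_⟩) <;>
                simp only [hQ, if_neg huv, if_neg hus, if_neg hvs, if_neg (Ne.symm hvs),
                  hsymE v s, eq_self_iff_true, if_true, one_mul, mul_one] <;>
              first | ring1 | nlinarith [aux1 hc0 hc1 (mul_nonneg (hnn u v) (hnn s v)) key]
            · -- all distinct
              have H := h4 u v s t
              simp only [hQ, if_neg huv, if_neg hst, if_neg hus, if_neg hvt,
                if_neg hut, if_neg hvs]
              have hcc : (0:ℝ) ≤ c * c := mul_nonneg hc0 hc0
              rcases H with ⟨h1, h2⟩ | ⟨h1, h2⟩ | ⟨h1, h2⟩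
              · exact Or.inl ⟨by linear_combination (c * c) * h1,
                  by nlinarith [mul_nonneg hcc (sub_nonneg.mpr h2)]⟩
              · exact Or.inr (Or.inl ⟨by linear_combination (c * c) * h1,
                  by nlinarith [mul_nonneg hcc (sub_nonneg.mpr h2)]⟩)
              · exact Or.inr (Or.inr ⟨by linear_combination (c * c) * h1,
                  by nlinarith [mul_nonneg hcc (sub_nonneg.mpr h2)]⟩)


lemma posSemidef_smul' {N : ℕ} {M : Matrix (Fin N) (Fin N) ℝ} (hM : M.PosSemidef)
    {c : ℝ} (hc : 0 ≤ c) : (c • M).PosSemidef := by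
  refine ⟨?_, fun y => ?_⟩
  · ext i j
    simp [Matrix.conjTranspose_apply]
    exact Or.inl (by simpa using congrFun (congrFun hM.1 i) j)
  · exact (hM.smul hc).2 y

lemma waldCond_one {N : ℕ} : WaldCond (1 : Matrix (Fin N) (Fin N) ℝ) := by
  refine ⟨Matrix.isSymm_one, Matrix.PosDef.one, fun u => by simp, ?_, ?_⟩
  · intro u v s t
    by_cases h1 : u = v <;> by_cases h2 : s = t <;> by_cases h3 : u = s <;>
      by_cases h4 : u = t <;> by_cases h5 : v = s <;> by_cases h6 : v = t <;>
      simp_all [Matrix.one_apply]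
  · intro u v
    rw [Matrix.one_apply]
    split_ifs <;> norm_num

lemma waldCond_blend {N : ℕ} (P : Matrix (Fin N) (Fin N) ℝ) (hP : WaldCond P)
    (x : ℝ) (hx : x ∈ Set.Icc (0:ℝ) 1) :
    WaldCond (x • (1 : Matrix (Fin N) (Fin N) ℝ) + (1 - x) • P) := by
  obtain ⟨hsym, hpd, hdiag, h4, hnn⟩ := hP
  obtain ⟨hx0, hx1⟩ := hx
  have hsymE : ∀ a b, P a b = P b a := fun a b => by
    simpa using (congrFun (congrFun hsym a) b).symm
  have hc0 : (0:ℝ) ≤ 1 - x := by linarith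
  have hc1 : (1:ℝ) - x ≤ 1 := by linarith
  have hle1 : ∀ a b, P a b ≤ 1 := by
    intro a b
    have H := h4 a a b b
    simp only [hdiag, one_mul, mul_one] at H
    rcases H with ⟨h1, h2⟩ | ⟨h1, h2⟩ | ⟨h1, h2⟩ <;> nlinarith [hnn a b]
  have hQ : ∀ a b, (x • (1 : Matrix (Fin N) (Fin N) ℝ) + (1 - x) • P) a b =
      if a = b then 1 else (1 - x) * P a b := by
    intro a b
    by_cases h : a = b
    · subst h
      simp [Matrix.add_apply, Matrix.one_apply, hdiag]
    · simp [Matrix.add_apply, Matrix.one_apply, h]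
  refine ⟨?_, ?_, fun u => by rw [hQ]; simp, ?_, ?_⟩
  · rw [Matrix.IsSymm, Matrix.transpose_add, Matrix.transpose_smul, Matrix.transpose_smul,
      Matrix.transpose_one, hsym]
  · rcases eq_or_lt_of_le hx0 with h | h
    · have : x • (1 : Matrix (Fin N) (Fin N) ℝ) + (1 - x) • P = P := by
        rw [← h]; simp
      rw [this]; exact hpd
    · have h1 : (x • (1 : Matrix (Fin N) (Fin N) ℝ)).PosDef := by
        rw [Matrix.smul_one_eq_diagonal]
        exact Matrix.PosDef.diagonal fun _ => h
      exact h1.add_posSemidef (posSemidef_smul' hpd.posSemidef hc0)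
  · exact blend_fourpoint P _ (1 - x) hc0 hc1 hsymE hdiag hnn hle1 h4 hQ
  · intro u v
    rw [hQ]
    split_ifs
    · norm_num
    · exact mul_nonneg hc0 (hnn u v)

/-- The subset of symmetric positive definite matrices satisfying
(R1)-(R3) is star-shaped with respect to the identity matrix: if `P` satisfies
(R1)-(R3), then so does `x·I + (1−x)·P` for all `x ∈ [0,1]` (in particular it
remains positive definite); consequently the subset is contractible. -/
theorem stmt_5 (N : ℕ) (hN : 2 ≤ N) :
    (∀ P : Matrix (Fin N) (Fin N) ℝ, WaldCond P → ∀ x ∈ Set.Icc (0:ℝ) 1,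
      WaldCond (x • (1 : Matrix (Fin N) (Fin N) ℝ) + (1 - x) • P)) ∧
    ContractibleSpace {P : Matrix (Fin N) (Fin N) ℝ // WaldCond P} := by
  refine ⟨fun P hP x hx => waldCond_blend P hP x hx, ?_⟩
  have hstar : StarConvex ℝ (1 : Matrix (Fin N) (Fin N) ℝ)
      {P : Matrix (Fin N) (Fin N) ℝ | WaldCond P} := by
    intro y hy a b ha hb hab
    have hb' : b = 1 - a := by linarith
    subst hb'
    exact waldCond_blend y hy a ⟨ha, by linarith⟩
  have hne : {P : Matrix (Fin N) (Fin N) ℝ | WaldCond P}.Nonempty := ⟨1, waldCond_one⟩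
  exact hstar.contractibleSpace hne
end

section
/- Let E' ≤ E be wald topologies (split systems) with induced leaf partitions L_1,...,L_K and L'_1,...,L'_{K'} respectively. If K = K', then (after relabeling) L'_α = L_α for all α, E'_α ⊆ E_α for all α, and R_{e'} = {e'} for every e' ∈ E'. -/
attribute [local instance] Classical.propDecidable

/-- A split: an unordered pair of finite sets of labels. -/
abbrev Split (N : ℕ) := Sym2 (Finset (Fin N))

namespace Wald

variable {N : ℕ}

/-- `e` is a split of the block `M`: `e = {A, B}` with `A, B` a partition of `M`
into two nonempty parts. -/
def IsSplitOf (e : Split N) (M : Finset (Fin N)) : Prop :=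
  ∃ A B : Finset (Fin N), e = s(A, B) ∧ A ∪ B = M ∧ Disjoint A B ∧
    A.Nonempty ∧ B.Nonempty

/-- Two splits `A|B` and `C|D` are compatible if one of the four intersections
`A∩C, A∩D, B∩C, B∩D` is empty. -/
def Compatible (e f : Split N) : Prop :=
  ∃ A B C D : Finset (Fin N), e = s(A, B) ∧ f = s(C, D) ∧
    (A ∩ C = ∅ ∨ A ∩ D = ∅ ∨ B ∩ C = ∅ ∨ B ∩ D = ∅)

/-- The split `e = A|B` separates `u` and `v` if `u ∈ A` and `v ∈ B` (or vice versa). -/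
def Separates (e : Split N) (u v : Fin N) : Prop :=
  ∃ A B : Finset (Fin N), e = s(A, B) ∧ u ∈ A ∧ v ∈ B

/-- The restriction `e|_{L'}` of a split `e = A|B`: `(A ∩ L')|(B ∩ L')`. -/
def restrict (e : Split N) (L' : Finset (Fin N)) : Split N :=
  Sym2.map (· ∩ L') e

/-- The underlying block `A ∪ B` of a split `e = A|B`. -/
def blockOf (e : Split N) : Finset (Fin N) :=
  Sym2.lift ⟨fun A B => A ∪ B, fun _ _ => Finset.union_comm _ _⟩ e

/-- The restriction of `e = A|B` to `L'` is a valid split iff both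
`A ∩ L'` and `B ∩ L'` are nonempty. -/
def ValidRestrict (e : Split N) (L' : Finset (Fin N)) : Prop :=
  ∃ A B : Finset (Fin N), e = s(A, B) ∧ (A ∩ L').Nonempty ∧ (B ∩ L').Nonempty

/-- A wald topology on the label set `{1,…,N}`: a partition of the labels into
blocks, together with a set of splits of the blocks, such that splits of a common
block are pairwise compatible and any two distinct labels of a common block are
separated by some split. -/
structure WaldTop (N : ℕ) where
  blocks : Finset (Finset (Fin N))
  splits : Finset (Split N)
  nonempty_blocks : ∀ B ∈ blocks, B.Nonempty
  cover : ∀ u : Fin N, ∃! B, B ∈ blocks ∧ u ∈ B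
  split_mem : ∀ e ∈ splits, ∃ B ∈ blocks, IsSplitOf e B
  compat : ∀ e ∈ splits, ∀ f ∈ splits, blockOf e = blockOf f → Compatible e f
  separating : ∀ B ∈ blocks, ∀ u ∈ B, ∀ v ∈ B, u ≠ v →
    ∃ e ∈ splits, Separates e u v

/-- The partial order `E' ≤ E` on wald topologies: refinement of the leaf
partitions, restriction of splits, and the cut property. -/
def LE' (E' E : WaldTop N) : Prop :=
  (∀ B' ∈ E'.blocks, ∃ B ∈ E.blocks, B' ⊆ B) ∧
  (∀ e' ∈ E'.splits, ∃ e ∈ E.splits, restrict e (blockOf e') = e') ∧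
  (∀ B₁ ∈ E'.blocks, ∀ B₂ ∈ E'.blocks, B₁ ≠ B₂ →
    ∀ B ∈ E.blocks, B₁ ⊆ B → B₂ ⊆ B →
      ∃ A C : Finset (Fin N), s(A, C) ∈ E.splits ∧ B₁ ⊆ A ∧ B₂ ⊆ C)

/-- `R_{e'}`: the splits of `E` whose restriction to the block of `e'` equals `e'`. -/
def Rset (E : WaldTop N) (e' : Split N) : Set (Split N) :=
  {e | e ∈ E.splits ∧ restrict e (blockOf e') = e'}

/-- `R_dis`: the splits of `E` admitting a valid restriction to some block of `E'`
which does not belong to `E'`. -/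
def Rdis (E' E : WaldTop N) : Set (Split N) :=
  {e | e ∈ E.splits ∧ ∃ B' ∈ E'.blocks, ValidRestrict e B' ∧ restrict e B' ∉ E'.splits}

/-- `R_cut`: the splits of `E` admitting no valid restriction to any block of `E'`. -/
def Rcut (E' E : WaldTop N) : Set (Split N) :=
  {e | e ∈ E.splits ∧ ∀ B' ∈ E'.blocks, ¬ ValidRestrict e B'}

/-- `E(u,v)`: the set of splits of `E` separating `u` and `v`. -/
def sepSet (E : WaldTop N) (u v : Fin N) : Set (Split N) :=
  {e | e ∈ E.splits ∧ Separates e u v}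

end Wald

namespace Wald

variable {N : ℕ}

theorem blockOf_restrict (e : Split N) (L : Finset (Fin N)) :
    blockOf (restrict e L) = blockOf e ∩ L := by
  induction e using Sym2.ind with
  | _ A B => simp [restrict, blockOf, Finset.union_inter_distrib_right]

theorem restrict_eq_self {e : Split N} {L : Finset (Fin N)} (hL : blockOf e ⊆ L) :
    restrict e L = e := by
  induction e using Sym2.ind with
  | _ A B =>
    simp only [blockOf, Sym2.lift_mk, Finset.union_subset_iff] at hL
    simp [restrict, Finset.inter_eq_left.mpr hL.1, Finset.inter_eq_left.mpr hL.2]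

theorem IsSplitOf.blockOf_eq {e : Split N} {M : Finset (Fin N)} (h : IsSplitOf e M) :
    blockOf e = M := by
  obtain ⟨A, B, rfl, hAB, -⟩ := h
  exact hAB

namespace WaldTop

variable (E : WaldTop N)

theorem exists_block_mem (u : Fin N) : ∃ B ∈ E.blocks, u ∈ B :=
  (E.cover u).exists

theorem block_eq_of_mem {B₁ B₂ : Finset (Fin N)} {u : Fin N} (h₁ : B₁ ∈ E.blocks)
    (h₂ : B₂ ∈ E.blocks) (hu₁ : u ∈ B₁) (hu₂ : u ∈ B₂) : B₁ = B₂ :=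
  (E.cover u).unique ⟨h₁, hu₁⟩ ⟨h₂, hu₂⟩

theorem block_eq_of_subset {B₁ B₂ : Finset (Fin N)} (h₁ : B₁ ∈ E.blocks)
    (h₂ : B₂ ∈ E.blocks) (hsub : B₁ ⊆ B₂) : B₁ = B₂ :=
  let ⟨_, hu⟩ := E.nonempty_blocks B₁ h₁
  E.block_eq_of_mem h₁ h₂ hu (hsub hu)

/-- Sending each block of the finer partition to the block containing it is onto; with equal
cardinalities it is injective, so no two fine blocks share a coarse block. -/
theorem blocks_eq_of_refines_of_card_eq {E' : WaldTop N}
    (hrefine : ∀ B' ∈ E'.blocks, ∃ B ∈ E.blocks, B' ⊆ B)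
    (hcard : E'.blocks.card = E.blocks.card) : E'.blocks = E.blocks := by
  choose! f hf_mem hf_sub using hrefine
  have hsurj : Set.SurjOn f E'.blocks E.blocks := by
    intro B hB
    obtain ⟨u, hu⟩ := E.nonempty_blocks B hB
    obtain ⟨B', hB', huB'⟩ := E'.exists_block_mem u
    exact ⟨B', hB', E.block_eq_of_mem (hf_mem B' hB') hB (hf_sub B' hB' huB') hu⟩
  have hinj : Set.InjOn f E'.blocks :=
    Finset.injOn_of_surjOn_of_card_le f hf_mem hsurj hcard.le
  have hfix : ∀ B' ∈ E'.blocks, f B' = B' := by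
    intro B' hB'
    refine (Finset.Subset.antisymm (hf_sub B' hB') fun u hu => ?_).symm
    obtain ⟨B'', hB'', huB''⟩ := E'.exists_block_mem u
    have hf : f B'' = f B' :=
      E.block_eq_of_mem (hf_mem B'' hB'') (hf_mem B' hB') (hf_sub B'' hB'' huB'') hu
    exact hinj hB'' hB' hf ▸ huB''
  refine Finset.eq_of_subset_of_card_le (fun B' hB' => ?_) hcard.ge
  exact hfix B' hB' ▸ hf_mem B' hB'

/-- A split of `E` restricting to a split of the block `B'` of `E` must already live on `B'`,
since its own block contains `B'`. -/
theorem eq_of_restrict_eq {e e' : Split N} {B' : Finset (Fin N)} (he : e ∈ E.splits)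
    (he' : IsSplitOf e' B') (hB' : B' ∈ E.blocks) (hre : restrict e B' = e') : e = e' := by
  obtain ⟨B, hB, he_split⟩ := E.split_mem e he
  have hsub : B' ⊆ B := by
    have := congrArg blockOf hre
    rw [blockOf_restrict, he_split.blockOf_eq, he'.blockOf_eq] at this
    exact this ▸ Finset.inter_subset_left
  have hB'B : B' = B := E.block_eq_of_subset hB' hB hsub
  rw [← hre, restrict_eq_self (he_split.blockOf_eq.trans hB'B.symm).subset]

end WaldTop

end Wald

open Wald in
/-- If `E' ≤ E` are wald topologies with the same number of blocks,
then the blocks agree, `E' ⊆ E` as split systems, and `R_{e'} = {e'}` for every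
`e' ∈ E'`. -/
theorem stmt_7 {N : ℕ} (E' E : WaldTop N) (h : LE' E' E)
    (hK : E'.blocks.card = E.blocks.card) :
    E'.blocks = E.blocks ∧ (E'.splits : Set (Split N)) ⊆ E.splits ∧
    ∀ e' ∈ E'.splits, Rset E e' = {e'} := by
  obtain ⟨hrefine, hrestrict, -⟩ := h
  have hblocks : E'.blocks = E.blocks := E.blocks_eq_of_refines_of_card_eq hrefine hK
  have hR : ∀ e' ∈ E'.splits, ∀ e ∈ Rset E e', e = e' := by
    rintro e' he' e ⟨he, hre⟩
    obtain ⟨B', hB', he'_split⟩ := E'.split_mem e' he'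
    rw [he'_split.blockOf_eq] at hre
    exact E.eq_of_restrict_eq he he'_split (hblocks ▸ hB') hre
  have hsplits : (E'.splits : Set (Split N)) ⊆ E.splits := fun e' he' =>
    let ⟨e, he, hre⟩ := hrestrict e' he'
    hR e' he' e ⟨he, hre⟩ ▸ he
  exact ⟨hblocks, hsplits, fun e' he' =>
    Set.eq_singleton_iff_unique_mem.mpr ⟨⟨hsplits he', restrict_eq_self le_rfl⟩, hR e' he'⟩⟩
end

section
/- Let E' ≤ E be wald topologies with leaf partitions L_1,...,L_K and L'_1,...,L'_{K'}, let u, v lie in a common block L'_{α'} of E', and let e' ∈ E'. Then the following are equivalent: (a) e' separates u and v (i.e., e' ∈ E'(u,v)); (b) R_{e'} ∩ E(u,v) ≠ ∅; (c) R_{e'} ⊆ E(u,v). -/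
attribute [local instance] Classical.propDecidable

/-!
Restricting a split to a block containing `u` and `v` does not change which sides `u` and `v`
lie on, so every `e ∈ R_{e'}` separates `u` and `v` exactly when `e'` does; since `R_{e'}` is
nonempty, (a), (b) and (c) all say the same thing.
-/

namespace Wald

variable {N : ℕ}

theorem separates_mk_iff {A B : Finset (Fin N)} {u v : Fin N} :
    Separates s(A, B) u v ↔ (u ∈ A ∧ v ∈ B) ∨ (u ∈ B ∧ v ∈ A) := by
  constructor
  · rintro ⟨C, D, hCD, huC, hvD⟩
    rcases Sym2.eq_iff.1 hCD with ⟨rfl, rfl⟩ | ⟨rfl, rfl⟩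
    exacts [Or.inl ⟨huC, hvD⟩, Or.inr ⟨huC, hvD⟩]
  · rintro (⟨hu, hv⟩ | ⟨hu, hv⟩)
    exacts [⟨A, B, rfl, hu, hv⟩, ⟨B, A, Sym2.eq_swap, hu, hv⟩]

theorem separates_restrict_iff {e : Split N} {L : Finset (Fin N)} {u v : Fin N}
    (hu : u ∈ L) (hv : v ∈ L) : Separates (restrict e L) u v ↔ Separates e u v := by
  induction e using Sym2.inductionOn with
  | hf A B =>
    change Separates s(A ∩ L, B ∩ L) u v ↔ _
    simp only [separates_mk_iff, Finset.mem_inter, hu, hv, and_true]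

theorem separates_iff_of_restrict_eq {e f : Split N} {u v : Fin N}
    (hf : restrict f (blockOf e) = e) (hu : u ∈ blockOf e) (hv : v ∈ blockOf e) :
    Separates e u v ↔ Separates f u v := by
  rw [← separates_restrict_iff (e := f) hu hv, hf]

theorem Rset_nonempty {E' E : WaldTop N} (h : LE' E' E) {e' : Split N}
    (he' : e' ∈ E'.splits) : (Rset E e').Nonempty :=
  h.2.1 e' he'

end Wald

open Wald in
theorem stmt_10_general {N : ℕ} (E' E : WaldTop N) (h : LE' E' E)
    (B' : Finset (Fin N))
    (u v : Fin N) (hu : u ∈ B') (hv : v ∈ B')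
    (e' : Split N) (he' : e' ∈ E'.splits) (hbe' : blockOf e' = B') :
    (Separates e' u v ↔ (Rset E e' ∩ sepSet E u v).Nonempty) ∧
    (Separates e' u v ↔ Rset E e' ⊆ sepSet E u v) := by
  have hR : ∀ f ∈ Rset E e', (Separates e' u v ↔ f ∈ sepSet E u v) := fun f hf => by
    rw [separates_iff_of_restrict_eq hf.2 (hbe' ▸ hu) (hbe' ▸ hv)]
    exact ⟨fun hsep => ⟨hf.1, hsep⟩, And.right⟩
  obtain ⟨e, he⟩ := Rset_nonempty h he'
  exact ⟨⟨fun hsep => ⟨e, he, (hR e he).1 hsep⟩, fun ⟨f, hf, hfsep⟩ => (hR f hf).2 hfsep⟩,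
    fun hsep f hf => (hR f hf).1 hsep, fun hsub => (hR e he).2 (hsub he)⟩

open Wald in
/-- For `E' ≤ E`, labels `u, v` in a common block `B'` of `E'` and
`e' ∈ E'` a split of `B'`, the following are equivalent: (a) `e'` separates `u`
and `v`; (b) `R_{e'} ∩ E(u,v) ≠ ∅`; (c) `R_{e'} ⊆ E(u,v)`. -/
theorem stmt_10 {N : ℕ} (E' E : WaldTop N) (h : LE' E' E)
    (B' : Finset (Fin N)) (hB' : B' ∈ E'.blocks)
    (u v : Fin N) (hu : u ∈ B') (hv : v ∈ B')
    (e' : Split N) (he' : e' ∈ E'.splits) (hbe' : blockOf e' = B') :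
    (Separates e' u v ↔ (Rset E e' ∩ sepSet E u v).Nonempty) ∧
    (Separates e' u v ↔ Rset E e' ⊆ sepSet E u v) :=
  stmt_10_general E' E h B' u v hu hv e' he' hbe'
end

section
/- For each fixed wald topology E with leaf partition L_1,...,L_K, the map φ_E : (0,1)^E → 𝒫, sending edge weights λ to the matrix with entries ρ_{uv} = ∏_{e ∈ E(u,v)} (1 − λ_e) (with ρ_{uu} = 1 and ρ_{uv} = 0 for u, v in different blocks), has injective differential at every point; that is, the derivative dφ_E has full rank |E| throughout (0,1)^E. -/
attribute [local instance] Classical.propDecidable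

namespace Wald

variable {N : ℕ}

/-- The grove parametrization `φ_E` of a fixed wald topology `E`, as a map from
edge weights `λ ∈ ℝ^E` to matrices (written as elements of the Euclidean space
`Fin N → Fin N → ℝ`): `ρ_{uv} = ∏_{e ∈ E(u,v)} (1 − λ_e)` for `u, v` in a common
block, `ρ_{uu} = 1`, and `ρ_{uv} = 0` across blocks. -/
noncomputable def phiE (E : WaldTop N) (lam : {e // e ∈ E.splits} → ℝ) :
    Fin N → Fin N → ℝ := fun u v =>
  if ∃ B ∈ E.blocks, u ∈ B ∧ v ∈ B then
    ∏ e ∈ Finset.univ.filter (fun e : {e // e ∈ E.splits} => Separates e.val u v),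
      (1 - lam e)
  else 0

end Wald

namespace Wald

lemma blockOf_mk (A B : Finset (Fin N)) : blockOf (s(A, B)) = A ∪ B := rfl

lemma block_unique {E : WaldTop N} {M M' : Finset (Fin N)} (hM : M ∈ E.blocks)
    (hM' : M' ∈ E.blocks) {u : Fin N} (hu : u ∈ M) (hu' : u ∈ M') : M = M' := by
  obtain ⟨B, _, huniq⟩ := E.cover u
  rw [huniq M ⟨hM, hu⟩, huniq M' ⟨hM', hu'⟩]

lemma split_struct {E : WaldTop N} {C D : Finset (Fin N)} (hf : s(C, D) ∈ E.splits) :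
    C ∪ D ∈ E.blocks ∧ Disjoint C D ∧ C.Nonempty ∧ D.Nonempty := by
  obtain ⟨M, hM, A', B', hfe, hun, hdis, hA', hB'⟩ := E.split_mem _ hf
  rcases Sym2.eq_iff.1 hfe with ⟨h1, h2⟩ | ⟨h1, h2⟩ <;> subst h1 <;> subst h2
  · exact ⟨hun ▸ hM, hdis, hA', hB'⟩
  · exact ⟨(Finset.union_comm C D) ▸ hun ▸ hM, hdis.symm, hB', hA'⟩

lemma sep_comm {f : Split N} {p q : Fin N} : Separates f p q ↔ Separates f q p := by
  constructor <;> rintro ⟨X, Y, hXY, hp, hq⟩ <;> exact ⟨Y, X, hXY.trans (Sym2.eq_swap), hq, hp⟩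

lemma sep_mk_iff {C D : Finset (Fin N)} (hdis : Disjoint C D) {p q : Fin N} (hq : q ∈ D) :
    Separates s(C, D) p q ↔ p ∈ C := by
  constructor
  · rintro ⟨X, Y, hXY, hp, hq'⟩
    rcases Sym2.eq_iff.1 hXY.symm with ⟨h1, h2⟩ | ⟨h1, h2⟩
    · subst h1; subst h2; exact hp
    · subst h1; subst h2; exact absurd hq (Finset.disjoint_left.1 hdis hq')
  · intro hp; exact ⟨C, D, rfl, hp, hq⟩

lemma compat_sets {E : WaldTop N} {C D C₀ D₀ : Finset (Fin N)}
    (hf : s(C, D) ∈ E.splits) (hf₀ : s(C₀, D₀) ∈ E.splits)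
    (hblock : C ∪ D = C₀ ∪ D₀) :
    C ∩ C₀ = ∅ ∨ C ∩ D₀ = ∅ ∨ D ∩ C₀ = ∅ ∨ D ∩ D₀ = ∅ := by
  obtain ⟨X, Y, Z, W, h1, h2, h3⟩ := E.compat _ hf _ hf₀ (by
    rw [blockOf_mk, blockOf_mk, hblock])
  rcases Sym2.eq_iff.1 h1 with ⟨hX, hY⟩ | ⟨hX, hY⟩ <;>
    rcases Sym2.eq_iff.1 h2 with ⟨hZ, hW⟩ | ⟨hZ, hW⟩ <;>
      subst hX <;> subst hY <;> subst hZ <;> subst hW <;> tauto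


noncomputable def badSet (E : WaldTop N) (A B : Finset (Fin N)) (v s : Fin N) :
    Finset (Split N) :=
  E.splits.filter (fun f => f ≠ s(A, B) ∧ ∃ C D : Finset (Fin N),
    f = s(C, D) ∧ C ⊆ B ∧ v ∈ C ∧ s ∈ C)

lemma mem_badSet {E : WaldTop N} {A B : Finset (Fin N)} {v s : Fin N} {f : Split N} :
    f ∈ badSet E A B v s ↔ f ∈ E.splits ∧ f ≠ s(A, B) ∧ ∃ C D : Finset (Fin N),
      f = s(C, D) ∧ C ⊆ B ∧ v ∈ C ∧ s ∈ C := Finset.mem_filter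

lemma choose_pair {E : WaldTop N} {A B : Finset (Fin N)} (he : s(A, B) ∈ E.splits) :
    ∃ v ∈ B, ∃ s ∈ B, ∀ f ∈ E.splits, f ≠ s(A, B) →
      ∀ C D : Finset (Fin N), f = s(C, D) → C ⊆ B → ¬(v ∈ C ∧ s ∈ C) := by
  obtain ⟨hMblk, hABdis, hA, hB⟩ := split_struct he
  obtain ⟨⟨v, s⟩, hmem, hmin⟩ := Finset.exists_min_image (B ×ˢ B)
    (fun p => (badSet E A B p.1 p.2).card) (hB.product hB)
  obtain ⟨hvB, hsB⟩ := Finset.mem_product.1 hmem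
  refine ⟨v, hvB, s, hsB, ?_⟩
  suffices hempty : badSet E A B v s = ∅ by
    intro f hf hne C D hfCD hCB hcon
    have : f ∈ badSet E A B v s :=
      mem_badSet.2 ⟨hf, hne, C, D, hfCD, hCB, hcon.1, hcon.2⟩
    simp [hempty] at this
  by_contra hne
  obtain ⟨f₀, hf₀⟩ := Finset.nonempty_iff_ne_empty.2 hne
  obtain ⟨hf₀s, hf₀ne, C₀, D₀, hf₀CD, hC₀B, hvC₀, hsC₀⟩ := mem_badSet.1 hf₀
  subst hf₀CD
  obtain ⟨hblk₀, hdis₀, hC₀ne, hD₀ne⟩ := split_struct hf₀s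
  have hblkeq : C₀ ∪ D₀ = A ∪ B :=
    block_unique hblk₀ hMblk (Finset.mem_union_left _ hvC₀) (Finset.mem_union_right _ hvB)
  have hAD₀ : A ⊆ D₀ := by
    intro a ha
    have h1 : a ∈ C₀ ∪ D₀ := hblkeq ▸ Finset.mem_union_left _ ha
    rcases Finset.mem_union.1 h1 with h | h
    · exact absurd (hC₀B h) (Finset.disjoint_left.1 hABdis ha)
    · exact h
  have hBC₀ : ¬ B ⊆ C₀ := by
    intro hsub
    have hC₀eq : C₀ = B := Finset.Subset.antisymm hC₀B hsub
    have hD₀eq : D₀ = A := by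
      apply Finset.Subset.antisymm _ hAD₀
      intro a ha
      have h1 : a ∈ A ∪ B := hblkeq ▸ Finset.mem_union_right _ ha
      rcases Finset.mem_union.1 h1 with h | h
      · exact h
      · exact absurd ha (Finset.disjoint_left.1 hdis₀ (by rwa [hC₀eq]))
    exact hf₀ne (by rw [hC₀eq, hD₀eq, Sym2.eq_swap])
  obtain ⟨s', hs'B, hs'C₀⟩ := Finset.not_subset.1 hBC₀
  have hs'D₀ : s' ∈ D₀ := by
    have h1 : s' ∈ C₀ ∪ D₀ := hblkeq ▸ Finset.mem_union_right _ hs'B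
    rcases Finset.mem_union.1 h1 with h | h
    · exact absurd h hs'C₀
    · exact h
  have hsub : badSet E A B v s' ⊆ badSet E A B v s := by
    intro f hf
    obtain ⟨hfs, hfne, C, D, hfCD, hCB, hvC, hs'C⟩ := mem_badSet.1 hf
    subst hfCD
    obtain ⟨hblk, hdis, _, _⟩ := split_struct hfs
    have hblkeq' : C ∪ D = C₀ ∪ D₀ :=
      block_unique hblk hblk₀ (Finset.mem_union_left _ hvC) (Finset.mem_union_left _ hvC₀)
    have h4 := compat_sets hfs hf₀s hblkeq'
    have h1 : C ∩ C₀ ≠ ∅ :=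
      Finset.ne_empty_of_mem (Finset.mem_inter.2 ⟨hvC, hvC₀⟩)
    have h2 : C ∩ D₀ ≠ ∅ :=
      Finset.ne_empty_of_mem (Finset.mem_inter.2 ⟨hs'C, hs'D₀⟩)
    have hAD : A ⊆ D := by
      intro a ha
      have hx : a ∈ C ∪ D := by
        rw [hblkeq', hblkeq]; exact Finset.mem_union_left _ ha
      rcases Finset.mem_union.1 hx with h | h
      · exact absurd (hCB h) (Finset.disjoint_left.1 hABdis ha)
      · exact h
    have hDD₀ : D ∩ D₀ ≠ ∅ := by
      obtain ⟨a, ha⟩ := hA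
      exact Finset.ne_empty_of_mem (Finset.mem_inter.2 ⟨hAD ha, hAD₀ ha⟩)
    have hDC₀ : D ∩ C₀ = ∅ := by tauto
    have hC₀C : C₀ ⊆ C := by
      intro a ha
      have hx : a ∈ C ∪ D := hblkeq' ▸ Finset.mem_union_left _ ha
      rcases Finset.mem_union.1 hx with h | h
      · exact h
      · exact absurd (Finset.mem_inter.2 ⟨h, ha⟩) (by simp [hDC₀])
    exact mem_badSet.2 ⟨hfs, hfne, C, D, rfl, hCB, hvC, hC₀C hsC₀⟩
  have hf₀notin : s(C₀, D₀) ∉ badSet E A B v s' := by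
    intro h
    obtain ⟨_, _, C, D, hCD, hCB, hvC, hs'C⟩ := mem_badSet.1 h
    rcases Sym2.eq_iff.1 hCD with ⟨h1, h2⟩ | ⟨h1, h2⟩
    · exact hs'C₀ (by rwa [h1])
    · obtain ⟨a, ha⟩ := hA
      exact Finset.disjoint_left.1 hABdis ha (hCB (h2 ▸ hAD₀ ha))
  have hlt : (badSet E A B v s').card < (badSet E A B v s).card :=
    Finset.card_lt_card ((Finset.ssubset_iff_of_subset hsub).2 ⟨_, hf₀, hf₀notin⟩)
  have hle : (badSet E A B v s).card ≤ (badSet E A B v s').card :=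
    hmin (v, s') (Finset.mem_product.2 ⟨hvB, hs'B⟩)
  omega

lemma not_sep_same {C D : Finset (Fin N)} (hCD : Disjoint C D) {p q : Fin N}
    (hp : p ∈ C) (hq : q ∈ C) : ¬ Separates s(C, D) p q := by
  rintro ⟨X, Y, hXY, hpX, hqY⟩
  rcases Sym2.eq_iff.1 hXY.symm with ⟨h1, h2⟩ | ⟨h1, h2⟩ <;> subst h1 <;> subst h2
  · exact Finset.disjoint_left.1 hCD hq hqY
  · exact Finset.disjoint_left.1 hCD hp hpX

lemma combo_zero {A B C D : Finset (Fin N)} (hAB : Disjoint A B) (hCD : Disjoint C D)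
    (hUn : C ∪ D = A ∪ B) (hCB : C ⊆ B) {u t v s : Fin N}
    (hu : u ∈ A) (ht : t ∈ A) (hv : v ∈ B) (hs : s ∈ B)
    (hbad : ¬(v ∈ C ∧ s ∈ C)) (y : ℝ) :
    ((if Separates s(C, D) u v then y else 0) + (if Separates s(C, D) s t then y else 0))
      - ((if Separates s(C, D) u t then y else 0)
        + (if Separates s(C, D) v s then y else 0)) = 0 := by
  have hAD : A ⊆ D := by
    intro a ha
    have hx : a ∈ C ∪ D := hUn ▸ Finset.mem_union_left _ ha
    rcases Finset.mem_union.1 hx with h | h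
    · exact absurd (hCB h) (Finset.disjoint_left.1 hAB ha)
    · exact h
  have memD : ∀ a ∈ B, a ∉ C → a ∈ D := by
    intro a ha hnc
    have hx : a ∈ C ∪ D := hUn ▸ Finset.mem_union_right _ ha
    rcases Finset.mem_union.1 hx with h | h
    · exact absurd h hnc
    · exact h
  have hut : ¬ Separates s(C, D) u t := by
    rw [sep_mk_iff hCD (hAD ht)]
    exact Finset.disjoint_right.1 hCD (hAD hu)
  have huv : Separates s(C, D) u v ↔ v ∈ C := sep_comm.trans (sep_mk_iff hCD (hAD hu))
  have hst : Separates s(C, D) s t ↔ s ∈ C := sep_mk_iff hCD (hAD ht)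
  by_cases hvC : v ∈ C <;> by_cases hsC : s ∈ C
  · exact absurd ⟨hvC, hsC⟩ hbad
  · have hvs : Separates s(C, D) v s := (sep_mk_iff hCD (memD s hs hsC)).2 hvC
    rw [if_pos (huv.2 hvC), if_neg (fun h => hsC (hst.1 h)), if_neg hut, if_pos hvs]; ring
  · have hvs : Separates s(C, D) v s :=
      sep_comm.2 ((sep_mk_iff hCD (memD v hv hvC)).2 hsC)
    rw [if_neg (fun h => hvC (huv.1 h)), if_pos (hst.2 hsC), if_neg hut, if_pos hvs]; ring
  · have hvs : ¬ Separates s(C, D) v s := fun h => hvC ((sep_mk_iff hCD (memD s hs hsC)).1 h)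
    rw [if_neg (fun h => hvC (huv.1 h)), if_neg (fun h => hsC (hst.1 h)),
      if_neg hut, if_neg hvs]; ring

lemma combo_zero' {A B C D : Finset (Fin N)} (hAB : Disjoint A B) (hCD : Disjoint C D)
    (hUn : C ∪ D = A ∪ B) (hCA : C ⊆ A) {u t v s : Fin N}
    (hu : u ∈ A) (ht : t ∈ A) (hv : v ∈ B) (hs : s ∈ B)
    (hbad : ¬(u ∈ C ∧ t ∈ C)) (y : ℝ) :
    ((if Separates s(C, D) u v then y else 0) + (if Separates s(C, D) s t then y else 0))
      - ((if Separates s(C, D) u t then y else 0)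
        + (if Separates s(C, D) v s then y else 0)) = 0 := by
  have h := combo_zero hAB.symm hCD (hUn.trans (Finset.union_comm A B)) hCA hv hs hu ht hbad y
  have e1 : (if Separates s(C, D) v u then y else 0) = (if Separates s(C, D) u v then y else 0) :=
    if_congr sep_comm rfl rfl
  have e2 : (if Separates s(C, D) t s then y else 0) = (if Separates s(C, D) s t then y else 0) :=
    if_congr sep_comm rfl rfl
  have e3 : (if Separates s(C, D) u t then y else 0) = (if Separates s(C, D) t u then y else 0) :=
    if_congr sep_comm rfl rfl
  have e4 : (if Separates s(C, D) v s then y else 0) = (if Separates s(C, D) s v then y else 0) :=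
    if_congr sep_comm rfl rfl
  rw [e1, e2, e3, e4] at h
  linarith

lemma quartet {E : WaldTop N} {A B : Finset (Fin N)} (he : s(A, B) ∈ E.splits) :
    ∃ u ∈ A, ∃ t ∈ A, ∃ v ∈ B, ∃ s ∈ B, ∀ f ∈ E.splits, ∀ y : ℝ,
      ((if Separates f u v then y else 0) + (if Separates f s t then y else 0))
        - ((if Separates f u t then y else 0) + (if Separates f v s then y else 0))
        = if f = s(A, B) then 2 * y else 0 := by
  obtain ⟨hMblk, hABdis, hA, hB⟩ := split_struct he
  obtain ⟨v, hvB, s, hsB, hgoodB⟩ := choose_pair he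
  have he' : s(B, A) ∈ E.splits := by rwa [Sym2.eq_swap]
  obtain ⟨u, huA, t, htA, hgoodA⟩ := choose_pair he'
  refine ⟨u, huA, t, htA, v, hvB, s, hsB, ?_⟩
  intro f hf y
  induction f using Sym2.ind with
  | _ C D =>
  obtain ⟨hblk, hCD, hCne, hDne⟩ := split_struct hf
  by_cases hfe : s(C, D) = s(A, B)
  · rw [if_pos hfe, hfe]
    have h1 : Separates s(A, B) u v := ⟨A, B, rfl, huA, hvB⟩
    have h2 : Separates s(A, B) s t := ⟨B, A, Sym2.eq_swap, hsB, htA⟩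
    have h3 : ¬ Separates s(A, B) u t := not_sep_same hABdis huA htA
    have h4 : ¬ Separates s(A, B) v s := by
      rw [show s(A, B) = s(B, A) from Sym2.eq_swap]
      exact not_sep_same hABdis.symm hvB hsB
    rw [if_pos h1, if_pos h2, if_neg h3, if_neg h4]; ring
  · rw [if_neg hfe]
    by_cases hbeq : C ∪ D = A ∪ B
    · have memsub : ∀ X : Finset (Fin N), X ⊆ C ∪ D → X ∩ A = ∅ → X ⊆ B := by
        intro X hXsub hXA a ha
        have hx : a ∈ A ∪ B := hbeq ▸ hXsub ha
        rcases Finset.mem_union.1 hx with h | h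
        · exact absurd (Finset.mem_inter.2 ⟨ha, h⟩) (by simp [hXA])
        · exact h
      have memsub' : ∀ X : Finset (Fin N), X ⊆ C ∪ D → X ∩ B = ∅ → X ⊆ A := by
        intro X hXsub hXB a ha
        have hx : a ∈ A ∪ B := hbeq ▸ hXsub ha
        rcases Finset.mem_union.1 hx with h | h
        · exact h
        · exact absurd (Finset.mem_inter.2 ⟨ha, h⟩) (by simp [hXB])
      rcases compat_sets hf he hbeq with h | h | h | h
      · have hCB : C ⊆ B := memsub C Finset.subset_union_left h
        exact combo_zero hABdis hCD hbeq hCB huA htA hvB hsB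
          (hgoodB _ hf hfe C D rfl hCB) y
      · have hCA : C ⊆ A := memsub' C Finset.subset_union_left h
        have hfe' : s(C, D) ≠ s(B, A) := fun h => hfe (h.trans Sym2.eq_swap)
        exact combo_zero' hABdis hCD hbeq hCA huA htA hvB hsB
          (hgoodA _ hf hfe' C D rfl hCA) y
      · have hDB : D ⊆ B := memsub D Finset.subset_union_right h
        rw [show s(C, D) = s(D, C) from Sym2.eq_swap]
        have hfe2 : s(D, C) ≠ s(A, B) := fun h => hfe (Sym2.eq_swap.trans h)
        exact combo_zero hABdis hCD.symm (by rwa [Finset.union_comm]) hDB huA htA hvB hsB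
          (hgoodB _ (by rwa [Sym2.eq_swap] at hf) hfe2 D C rfl hDB) y
      · have hDA : D ⊆ A := memsub' D Finset.subset_union_right h
        rw [show s(C, D) = s(D, C) from Sym2.eq_swap]
        have hfe2 : s(D, C) ≠ s(B, A) := fun h => hfe ((Sym2.eq_swap.trans h).trans Sym2.eq_swap)
        exact combo_zero' hABdis hCD.symm (by rwa [Finset.union_comm]) hDA huA htA hvB hsB
          (hgoodA _ (by rwa [Sym2.eq_swap] at hf) hfe2 D C rfl hDA) y
    · have hnosep : ∀ p q : Fin N, p ∈ A ∪ B → ¬ Separates s(C, D) p q := by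
        rintro p q hp ⟨X, Y, hXY, hpX, hqY⟩
        have hpCD : p ∈ C ∪ D := by
          rcases Sym2.eq_iff.1 hXY.symm with ⟨h1, h2⟩ | ⟨h1, h2⟩
          · exact Finset.mem_union_left _ (h1 ▸ hpX)
          · exact Finset.mem_union_right _ (h1 ▸ hpX)
        exact hbeq (block_unique hblk hMblk hpCD hp)
      rw [if_neg (hnosep u v (Finset.mem_union_left _ huA)),
        if_neg (hnosep s t (Finset.mem_union_right _ hsB)),
        if_neg (hnosep u t (Finset.mem_union_left _ huA)),
        if_neg (hnosep v s (Finset.mem_union_right _ hvB))]; ring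


noncomputable def sepFinset (E : WaldTop N) (u v : Fin N) : Finset {e // e ∈ E.splits} :=
  Finset.univ.filter (fun e => Separates e.val u v)

noncomputable def derivCLM (E : WaldTop N) (lam : {e // e ∈ E.splits} → ℝ) :
    ({e // e ∈ E.splits} → ℝ) →L[ℝ] (Fin N → Fin N → ℝ) :=
  ContinuousLinearMap.pi fun u => ContinuousLinearMap.pi fun v =>
    if ∃ B ∈ E.blocks, u ∈ B ∧ v ∈ B then
      ∑ f ∈ sepFinset E u v, (∏ g ∈ (sepFinset E u v).erase f, (1 - lam g)) •
        ((0 : ({e // e ∈ E.splits} → ℝ) →L[ℝ] ℝ) - ContinuousLinearMap.proj f)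
    else 0

lemma hasFDerivAt_phiE (E : WaldTop N) (lam : {e // e ∈ E.splits} → ℝ) :
    HasFDerivAt (phiE E) (derivCLM E lam) lam := by
  apply hasFDerivAt_pi.2
  intro u
  apply hasFDerivAt_pi.2
  intro v
  by_cases hc : ∃ B ∈ E.blocks, u ∈ B ∧ v ∈ B
  · rw [if_pos hc]
    have heq : (fun l : {e // e ∈ E.splits} → ℝ => phiE E l u v)
        = fun l => ∏ e ∈ sepFinset E u v, (1 - l e) := by
      funext l; simp only [phiE, if_pos hc, sepFinset]
    rw [heq]
    exact HasFDerivAt.finset_prod fun f _ =>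
      (hasFDerivAt_const (1 : ℝ) lam).sub (hasFDerivAt_apply f lam)
  · rw [if_neg hc]
    have heq : (fun l : {e // e ∈ E.splits} → ℝ => phiE E l u v) = fun _ => 0 := by
      funext l; simp only [phiE, if_neg hc]
    rw [heq]
    exact hasFDerivAt_const 0 lam

end Wald


open Wald in
/-- For a fixed wald topology `E`, the derivative of the grove
parametrization `φ_E` is injective (has full rank `|E|`) at every
`λ ∈ (0,1)^E`. -/
theorem stmt_17 {N : ℕ} (E : WaldTop N)
    (lam : {e // e ∈ E.splits} → ℝ) (hlam : ∀ e, lam e ∈ Set.Ioo (0:ℝ) 1) :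
    Function.Injective (fderiv ℝ (phiE E) lam) := by
  have hder := hasFDerivAt_phiE E lam
  intro x x' hxx'
  have hz : fderiv ℝ (phiE E) lam (x - x') = 0 := by rw [map_sub, hxx', sub_self]
  rw [hder.fderiv] at hz
  set z := x - x' with hzdef
  suffices hz0 : z = 0 by
    have := sub_eq_zero.1 (hzdef ▸ hz0)
    exact this
  have h1 : ∀ f : {e // e ∈ E.splits}, (1:ℝ) - lam f ≠ 0 :=
    fun f => ne_of_gt (by linarith [(hlam f).2])
  set y : {e // e ∈ E.splits} → ℝ := fun f => z f / (1 - lam f) with hy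
  have hzy : ∀ f, z f = (1 - lam f) * y f := by
    intro f
    rw [hy]
    field_simp
    rw [mul_div_cancel_right₀ _ (h1 f)]
  have hsum : ∀ u v : Fin N, (∃ B ∈ E.blocks, u ∈ B ∧ v ∈ B) →
      ∑ f ∈ sepFinset E u v, y f = 0 := by
    intro u v hc
    have h0 : (derivCLM E lam z) u v = 0 := by rw [hz]; rfl
    have h0' : ∑ f ∈ sepFinset E u v,
        (∏ g ∈ (sepFinset E u v).erase f, (1 - lam g)) * (0 - z f) = 0 := by
      simpa only [derivCLM, ContinuousLinearMap.pi_apply, if_pos hc,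
        ContinuousLinearMap.sum_apply, ContinuousLinearMap.smul_apply,
        ContinuousLinearMap.sub_apply, ContinuousLinearMap.zero_apply,
        ContinuousLinearMap.proj_apply, smul_eq_mul] using h0
    have h0'' : ∑ f ∈ sepFinset E u v,
        (∏ g ∈ (sepFinset E u v).erase f, (1 - lam g)) * z f = 0 := by
      have hneg : ∑ f ∈ sepFinset E u v,
          (∏ g ∈ (sepFinset E u v).erase f, (1 - lam g)) * z f
          = - ∑ f ∈ sepFinset E u v,
              (∏ g ∈ (sepFinset E u v).erase f, (1 - lam g)) * (0 - z f) := by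
        rw [← Finset.sum_neg_distrib]
        apply Finset.sum_congr rfl
        intro f _; ring
      rw [hneg, h0', neg_zero]
    have hterm : ∀ f ∈ sepFinset E u v,
        (∏ g ∈ (sepFinset E u v).erase f, (1 - lam g)) * z f
          = (∏ g ∈ sepFinset E u v, (1 - lam g)) * y f := by
      intro f hf
      rw [← Finset.mul_prod_erase _ _ hf, hzy f]
      ring
    rw [Finset.sum_congr rfl hterm, ← Finset.mul_sum] at h0''
    have hP : (∏ g ∈ sepFinset E u v, (1 - lam g)) ≠ 0 :=
      Finset.prod_ne_zero_iff.2 fun g _ => h1 g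
    exact (mul_eq_zero.1 h0'').resolve_left hP
  have hzf : ∀ f : {e // e ∈ E.splits}, z f = 0 := by
    intro f
    obtain ⟨M, hM, A, B, hfAB, hUn, hdis, hA, hB⟩ := E.split_mem f.1 f.2
    have he : s(A, B) ∈ E.splits := hfAB ▸ f.2
    obtain ⟨u, huA, t, htA, v, hvB, s, hsB, hkey⟩ := quartet he
    have hmem : ∀ a : Fin N, a ∈ A ∪ B → a ∈ M := fun a ha => hUn ▸ ha
    have hcond : ∀ p q : Fin N, p ∈ A ∪ B → q ∈ A ∪ B →
        ∃ B' ∈ E.blocks, p ∈ B' ∧ q ∈ B' :=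
      fun p q hp hq => ⟨M, hM, hmem p hp, hmem q hq⟩
    have huAB : u ∈ A ∪ B := Finset.mem_union_left _ huA
    have htAB : t ∈ A ∪ B := Finset.mem_union_left _ htA
    have hvAB : v ∈ A ∪ B := Finset.mem_union_right _ hvB
    have hsAB : s ∈ A ∪ B := Finset.mem_union_right _ hsB
    have conv : ∀ p q : Fin N, ∑ g ∈ sepFinset E p q, y g
        = ∑ g : {e // e ∈ E.splits}, if Separates g.val p q then y g else 0 := by
      intro p q; rw [sepFinset, Finset.sum_filter]
    have Huv := hsum u v (hcond u v huAB hvAB)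
    have Hst := hsum s t (hcond s t hsAB htAB)
    have Hut := hsum u t (hcond u t huAB htAB)
    have Hvs := hsum v s (hcond v s hvAB hsAB)
    rw [conv] at Huv Hst Hut Hvs
    have hbig : ∑ g : {e // e ∈ E.splits},
        (((if Separates g.val u v then y g else 0) + (if Separates g.val s t then y g else 0))
          - ((if Separates g.val u t then y g else 0)
            + (if Separates g.val v s then y g else 0))) = 0 := by
      rw [Finset.sum_sub_distrib, Finset.sum_add_distrib, Finset.sum_add_distrib,
        Huv, Hst, Hut, Hvs]
      ring
    have hbig2 : ∑ g : {e // e ∈ E.splits},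
        (if g = f then 2 * y g else 0) = (0:ℝ) := by
      rw [← hbig]
      apply Finset.sum_congr rfl
      intro g _
      rw [hkey g.val g.2 (y g)]
      congr 1
      rw [show (g.val = s(A, B)) = (g = f) from
        propext ⟨fun h => Subtype.ext (h.trans hfAB.symm), fun h => h ▸ hfAB⟩]
    rw [Finset.sum_ite_eq' Finset.univ f, if_pos (Finset.mem_univ f)] at hbig2
    have hyf : y f = 0 := by linarith
    rw [hzy f, hyf, mul_zero]
  funext f
  exact hzf f
end

section
/- Let E be a wald topology, let λ* be a point of the boundary ∂([0,1]^E), and let (ρ*_{uv}) = φ̄_E(λ*) be the matrix with entries ρ*_{uv} = ∏_{e ∈ E(u,v)} (1 − λ*_e) (unit diagonal, zero across components). Then φ̄_E(λ*) is positive definite if and only if ρ*_{uv} < 1 for all u ≠ v. -/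
attribute [local instance] Classical.propDecidable

namespace Wald

variable {N : ℕ}

/-- The continuous extension `φ̄_E` of the grove parametrization of a wald
topology `E` to all of `[0,1]^E` (indeed `ℝ^E`), with values in symmetric
matrices: `ρ_{uv} = ∏_{e ∈ E(u,v)} (1 − λ_e)` for `u, v` in a common block,
`ρ_{uu} = 1`, `ρ_{uv} = 0` across blocks. -/
noncomputable def phiBar (E : WaldTop N) (lam : {e // e ∈ E.splits} → ℝ) :
    Matrix (Fin N) (Fin N) ℝ := fun u v =>
  if ∃ B ∈ E.blocks, u ∈ B ∧ v ∈ B then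
    ∏ e ∈ Finset.univ.filter (fun e : {e // e ∈ E.splits} => Separates e.val u v),
      (1 - lam e)
  else 0

end Wald

namespace WaldAux

open Wald Finset Matrix

variable {N : ℕ}

lemma separates_symm {e : Split N} {u v : Fin N} (h : Separates e u v) :
    Separates e v u := by
  obtain ⟨A, B, he, hu, hv⟩ := h
  exact ⟨B, A, he.trans (Sym2.eq_swap), hv, hu⟩

lemma splits_canon (E : WaldTop N) {e : Split N} (he : e ∈ E.splits) :
    ∃ A B : Finset (Fin N), e = s(A, B) ∧ Disjoint A B ∧ A ∪ B ∈ E.blocks := by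
  obtain ⟨M, hM, A, B, h1, h2, h3, _, _⟩ := E.split_mem e he
  exact ⟨A, B, h1, h3, h2 ▸ hM⟩

lemma block_unique (E : WaldTop N) {B₁ B₂ : Finset (Fin N)} {t : Fin N}
    (h₁ : B₁ ∈ E.blocks) (h₂ : B₂ ∈ E.blocks) (ht₁ : t ∈ B₁) (ht₂ : t ∈ B₂) :
    B₁ = B₂ :=
  (E.cover t).unique ⟨h₁, ht₁⟩ ⟨h₂, ht₂⟩

lemma sep_sides (E : WaldTop N) {e : Split N} (he : e ∈ E.splits) {u v : Fin N}
    (h : Separates e u v) :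
    ∃ A B : Finset (Fin N), e = s(A, B) ∧ Disjoint A B ∧ A ∪ B ∈ E.blocks ∧
      u ∈ A ∧ v ∈ B := by
  obtain ⟨A, B, hAB, hd, hbl⟩ := splits_canon E he
  obtain ⟨A', B', hAB', hu, hv⟩ := h
  have : s(A, B) = s(A', B') := hAB.symm.trans hAB'
  rw [Sym2.eq_iff] at this
  rcases this with ⟨rfl, rfl⟩ | ⟨rfl, rfl⟩
  · exact ⟨A, B, hAB, hd, hbl, hu, hv⟩
  · exact ⟨B, A, hAB.trans Sym2.eq_swap, hd.symm, by rwa [Finset.union_comm], hu, hv⟩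

lemma not_sep_self (E : WaldTop N) {e : Split N} (he : e ∈ E.splits) (u : Fin N) :
    ¬ Separates e u u := by
  intro h
  obtain ⟨A, B, _, hd, _, hu, hv⟩ := sep_sides E he h
  exact Finset.disjoint_left.mp hd hu hv

lemma phiBar_diag (E : WaldTop N) (lam : {e // e ∈ E.splits} → ℝ) (u : Fin N) :
    phiBar E lam u u = 1 := by
  obtain ⟨B, ⟨hB, huB⟩, -⟩ := E.cover u
  rw [phiBar, if_pos ⟨B, hB, huB, huB⟩, Finset.filter_false_of_mem
    (fun e _ => not_sep_self E e.2 u), Finset.prod_empty]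

lemma phiBar_symm (E : WaldTop N) (lam : {e // e ∈ E.splits} → ℝ) (u v : Fin N) :
    phiBar E lam u v = phiBar E lam v u := by
  have h1 : (∃ B ∈ E.blocks, u ∈ B ∧ v ∈ B) ↔ (∃ B ∈ E.blocks, v ∈ B ∧ u ∈ B) :=
    ⟨fun ⟨B, h1, h2, h3⟩ => ⟨B, h1, h3, h2⟩, fun ⟨B, h1, h2, h3⟩ => ⟨B, h1, h3, h2⟩⟩
  have h2 : (fun e : {e // e ∈ E.splits} => Separates e.val u v) =
      (fun e : {e // e ∈ E.splits} => Separates e.val v u) :=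
    funext fun e => propext ⟨separates_symm, separates_symm⟩
  rw [phiBar, phiBar]
  by_cases hb : ∃ B ∈ E.blocks, u ∈ B ∧ v ∈ B
  · rw [if_pos hb, if_pos (h1.mp hb)]
    apply Finset.prod_congr _ (fun _ _ => rfl)
    exact Finset.filter_congr fun e _ => ⟨separates_symm, separates_symm⟩
  · rw [if_neg hb, if_neg (fun h => hb (h1.mpr h))]

/-- The equivalence relation: `u, v` lie in a common block and are not
separated by any split in `T`. -/
def Rrel (E : WaldTop N) (T : Finset {e // e ∈ E.splits}) (u v : Fin N) : Prop :=
  (∃ B ∈ E.blocks, u ∈ B ∧ v ∈ B) ∧ ∀ e ∈ T, ¬ Separates (e : {e // e ∈ E.splits}).val u v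

lemma Rrel_refl (E : WaldTop N) (T : Finset {e // e ∈ E.splits}) (u : Fin N) :
    Rrel E T u u := by
  obtain ⟨B, ⟨hB, huB⟩, -⟩ := E.cover u
  exact ⟨⟨B, hB, huB, huB⟩, fun e _ => not_sep_self E e.2 u⟩

lemma Rrel_symm {E : WaldTop N} {T : Finset {e // e ∈ E.splits}} {u v : Fin N}
    (h : Rrel E T u v) : Rrel E T v u := by
  obtain ⟨⟨B, hB, hu, hv⟩, hsep⟩ := h
  exact ⟨⟨B, hB, hv, hu⟩, fun e he hs => hsep e he (separates_symm hs)⟩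

lemma Rrel_trans {E : WaldTop N} {T : Finset {e // e ∈ E.splits}} {u v w : Fin N}
    (h1 : Rrel E T u v) (h2 : Rrel E T v w) : Rrel E T u w := by
  obtain ⟨⟨B₁, hB₁, hu, hv⟩, hsep₁⟩ := h1
  obtain ⟨⟨B₂, hB₂, hv', hw⟩, hsep₂⟩ := h2
  have hBeq : B₁ = B₂ := block_unique E hB₁ hB₂ hv hv'
  refine ⟨⟨B₁, hB₁, hu, hBeq ▸ hw⟩, fun e he hs => ?_⟩
  obtain ⟨A, C, hAC, hd, hbl, huA, hwC⟩ := sep_sides E e.2 hs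
  -- v lies in the block A ∪ C
  have hvblock : v ∈ A ∪ C := by
    have : B₁ = A ∪ C := block_unique E hB₁ hbl hu (Finset.mem_union_left _ huA)
    exact this ▸ hv
  rcases Finset.mem_union.mp hvblock with hvA | hvC
  · exact hsep₂ e he ⟨A, C, hAC, hvA, hwC⟩
  · exact hsep₁ e he ⟨A, C, hAC, huA, hvC⟩

/-- A representative of the `Rrel`-class of `u`. -/
noncomputable def rep (E : WaldTop N) (T : Finset {e // e ∈ E.splits}) (u : Fin N) :
    Fin N :=
  (Finset.univ.filter (Rrel E T u)).min'
    ⟨u, Finset.mem_filter.mpr ⟨Finset.mem_univ u, Rrel_refl E T u⟩⟩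

lemma rep_spec (E : WaldTop N) (T : Finset {e // e ∈ E.splits}) (u : Fin N) :
    Rrel E T u (rep E T u) :=
  (Finset.mem_filter.mp (Finset.min'_mem _ _)).2

lemma rel_iff_rep_eq (E : WaldTop N) (T : Finset {e // e ∈ E.splits}) (u v : Fin N) :
    Rrel E T u v ↔ rep E T u = rep E T v := by
  constructor
  · intro h
    have hfe : Finset.univ.filter (Rrel E T u) = Finset.univ.filter (Rrel E T v) := by
      apply Finset.filter_congr
      intro w _
      exact ⟨fun h' => Rrel_trans (Rrel_symm h) h', fun h' => Rrel_trans h h'⟩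
    simp only [rep, hfe]
  · intro h
    have h1 := rep_spec E T u
    have h2 := rep_spec E T v
    rw [← h] at h2
    exact Rrel_trans h1 (Rrel_symm h2)

/-- The key entrywise expansion of `phiBar` into indicator matrices of
equivalence relations. -/
lemma phiBar_eq_sum (E : WaldTop N) (lam : {e // e ∈ E.splits} → ℝ) (u v : Fin N) :
    phiBar E lam u v =
      ∑ T ∈ (Finset.univ : Finset {e // e ∈ E.splits}).powerset,
        ((∏ e ∈ T, lam e) * ∏ e ∈ Finset.univ \ T, (1 - lam e)) *
          (if Rrel E T u v then 1 else 0) := by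
  by_cases hb : ∃ B ∈ E.blocks, u ∈ B ∧ v ∈ B
  · rw [phiBar, if_pos hb]
    have key : ∀ T ∈ (Finset.univ : Finset {e // e ∈ E.splits}).powerset,
        ((∏ e ∈ T, lam e) * ∏ e ∈ Finset.univ \ T, (1 - lam e)) *
          (if Rrel E T u v then (1:ℝ) else 0) =
        (∏ e ∈ T, lam e * (if Separates (e : {e // e ∈ E.splits}).val u v then (0:ℝ) else 1)) *
          ∏ e ∈ Finset.univ \ T, (1 - lam e) := by
      intro T _
      have : (if Rrel E T u v then (1:ℝ) else 0) =
          ∏ e ∈ T, (if Separates (e : {e // e ∈ E.splits}).val u v then (0:ℝ) else 1) := by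
        by_cases hR : ∀ e ∈ T, ¬ Separates (e : {e // e ∈ E.splits}).val u v
        · rw [if_pos ⟨hb, hR⟩, eq_comm]
          exact Finset.prod_eq_one fun e heT => if_neg (hR e heT)
        · rw [if_neg (fun h => hR h.2)]
          push_neg at hR
          obtain ⟨e, heT, hsep⟩ := hR
          exact (Finset.prod_eq_zero (f := fun e : {e // e ∈ E.splits} =>
            if Separates e.val u v then (0:ℝ) else 1) heT (if_pos hsep)).symm
      rw [this, Finset.prod_mul_distrib]
      ring
    rw [Finset.sum_congr rfl key, ← Finset.prod_add]
    have : ∀ e : {e // e ∈ E.splits},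
        lam e * (if Separates (e : {e // e ∈ E.splits}).val u v then (0:ℝ) else 1) + (1 - lam e) =
        if Separates (e : {e // e ∈ E.splits}).val u v then (1 - lam e) else 1 := by
      intro e
      by_cases h : Separates (e : {e // e ∈ E.splits}).val u v <;> simp [h]
    rw [Finset.prod_congr rfl (fun e _ => this e), ← Finset.prod_filter]
  · rw [phiBar, if_neg hb, eq_comm]
    exact Finset.sum_eq_zero fun T _ => by rw [if_neg (fun h => hb h.1), mul_zero]

/-- The quadratic form of each indicator matrix is nonnegative. -/
lemma quad_nonneg (E : WaldTop N) (T : Finset {e // e ∈ E.splits}) (x : Fin N → ℝ) :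
    0 ≤ ∑ u, ∑ v, x u * ((if Rrel E T u v then (1:ℝ) else 0) * x v) := by
  set c := rep E T with hc
  set g : Fin N → ℝ := fun w => ∑ v ∈ Finset.univ.filter (fun v => c v = w), x v with hg
  have h1 : ∀ u, ∑ v, (if Rrel E T u v then (1:ℝ) else 0) * x v = g (c u) := by
    intro u
    rw [hg]
    simp only
    rw [Finset.sum_filter]
    apply Finset.sum_congr rfl
    intro v _
    by_cases h : Rrel E T u v
    · rw [if_pos h, if_pos ((rel_iff_rep_eq E T u v).mp h).symm, one_mul]
    · rw [if_neg h, if_neg (fun h' => h ((rel_iff_rep_eq E T u v).mpr h'.symm)), zero_mul]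
  have h2 : ∑ u, ∑ v, x u * ((if Rrel E T u v then (1:ℝ) else 0) * x v)
      = ∑ u, x u * g (c u) := by
    apply Finset.sum_congr rfl
    intro u _
    rw [← h1 u, Finset.mul_sum]
  rw [h2]
  have h3 : ∑ u, x u * g (c u) =
      ∑ w, ∑ u ∈ Finset.univ.filter (fun u => c u = w), x u * g (c u) :=
    (Finset.sum_fiberwise_of_maps_to (fun i _ => Finset.mem_univ (c i)) _).symm
  rw [h3]
  apply Finset.sum_nonneg
  intro w _
  have : ∑ u ∈ Finset.univ.filter (fun u => c u = w), x u * g (c u) = g w * g w := by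
    rw [show g w * g w = (∑ u ∈ Finset.univ.filter (fun u => c u = w), x u) * g w from by rw [hg]]
    rw [Finset.sum_mul]
    apply Finset.sum_congr rfl
    intro u hu
    rw [(Finset.mem_filter.mp hu).2]
  rw [this]
  exact mul_self_nonneg _

lemma main (E : WaldTop N) (lam : {e // e ∈ E.splits} → ℝ)
    (hmem : ∀ e, lam e ∈ Set.Icc (0:ℝ) 1) :
    (phiBar E lam).PosDef ↔
      ∀ u v : Fin N, u ≠ v → phiBar E lam u v < 1 := by
  constructor
  · -- forward: positive definite ⇒ off-diagonal entries < 1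
    intro hPD u v huv
    set x : Fin N → ℝ := Pi.single u 1 - Pi.single v 1 with hx
    have hx0 : x ≠ 0 := by
      intro h
      have := congrFun h u
      simp [hx, Pi.single_apply, huv, Ne.symm huv] at this
    have hpos := hPD.dotProduct_mulVec_pos hx0
    have hstar : star x = x := funext fun i => star_trivial _
    rw [hstar] at hpos
    have hcomp : x ⬝ᵥ (phiBar E lam *ᵥ x) = (phiBar E lam u u - phiBar E lam u v)
        - (phiBar E lam v u - phiBar E lam v v) := by
      rw [hx, Matrix.mulVec_sub, Matrix.mulVec_single, Matrix.mulVec_single,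
        sub_dotProduct, single_dotProduct, single_dotProduct]
      simp
    rw [hcomp, phiBar_diag E lam u, phiBar_diag E lam v,
      phiBar_symm E lam v u] at hpos
    linarith
  · -- backward
    intro hlt
    have hherm : (phiBar E lam).IsHermitian := by
      ext i j
      simp only [Matrix.conjTranspose_apply, star_trivial]
      exact phiBar_symm E lam j i
    refine Matrix.PosDef.of_dotProduct_mulVec_pos hherm fun x hx0 => ?_
    have hstar : star x = x := funext fun i => star_trivial _
    rw [hstar]
    set coef : Finset {e // e ∈ E.splits} → ℝ :=
      fun T => (∏ e ∈ T, lam e) * ∏ e ∈ Finset.univ \ T, (1 - lam e) with hcoef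
    set quad : Finset {e // e ∈ E.splits} → ℝ :=
      fun T => ∑ u, ∑ v, x u * ((if Rrel E T u v then (1:ℝ) else 0) * x v) with hquad
    have step : ∀ u, (phiBar E lam *ᵥ x) u =
        ∑ T ∈ (Finset.univ : Finset {e // e ∈ E.splits}).powerset,
          coef T * ∑ v, (if Rrel E T u v then (1:ℝ) else 0) * x v := by
      intro u
      show ∑ v, phiBar E lam u v * x v = _
      calc ∑ v, phiBar E lam u v * x v
          = ∑ v, ∑ T ∈ (Finset.univ : Finset {e // e ∈ E.splits}).powerset,
              (coef T * (if Rrel E T u v then (1:ℝ) else 0)) * x v := by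
            refine Finset.sum_congr rfl fun v _ => ?_
            rw [phiBar_eq_sum E lam u v, Finset.sum_mul]
        _ = ∑ T ∈ (Finset.univ : Finset {e // e ∈ E.splits}).powerset,
              ∑ v, (coef T * (if Rrel E T u v then (1:ℝ) else 0)) * x v :=
            Finset.sum_comm
        _ = _ := by
            refine Finset.sum_congr rfl fun T _ => ?_
            rw [Finset.mul_sum]
            exact Finset.sum_congr rfl fun v _ => by ring
    have hexp : x ⬝ᵥ (phiBar E lam *ᵥ x) =
        ∑ T ∈ (Finset.univ : Finset {e // e ∈ E.splits}).powerset, coef T * quad T := by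
      calc x ⬝ᵥ (phiBar E lam *ᵥ x)
          = ∑ u, x u * ∑ T ∈ (Finset.univ : Finset {e // e ∈ E.splits}).powerset,
              coef T * ∑ v, (if Rrel E T u v then (1:ℝ) else 0) * x v := by
            refine Finset.sum_congr rfl fun u _ => ?_
            rw [step u]
        _ = ∑ u, ∑ T ∈ (Finset.univ : Finset {e // e ∈ E.splits}).powerset,
              coef T * (x u * ∑ v, (if Rrel E T u v then (1:ℝ) else 0) * x v) := by
            refine Finset.sum_congr rfl fun u _ => ?_
            rw [Finset.mul_sum]
            exact Finset.sum_congr rfl fun T _ => by ring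
        _ = ∑ T ∈ (Finset.univ : Finset {e // e ∈ E.splits}).powerset,
              ∑ u, coef T * (x u * ∑ v, (if Rrel E T u v then (1:ℝ) else 0) * x v) :=
            Finset.sum_comm
        _ = _ := by
            refine Finset.sum_congr rfl fun T _ => ?_
            rw [← Finset.mul_sum, hquad]
            congr 1
            refine Finset.sum_congr rfl fun u _ => ?_
            rw [Finset.mul_sum]
    rw [hexp]
    set Tstar : Finset {e // e ∈ E.splits} :=
      Finset.univ.filter (fun e => 0 < lam e) with hTstar
    have hlam0 : ∀ e : {e // e ∈ E.splits}, e ∉ Tstar → lam e = 0 := by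
      intro e he
      have := (hmem e).1
      rw [hTstar] at he
      simp only [Finset.mem_filter, Finset.mem_univ, true_and, not_lt] at he
      linarith
    have hcoef_pos : 0 < coef Tstar := by
      rw [hcoef]
      apply mul_pos
      · exact Finset.prod_pos fun e he => (Finset.mem_filter.mp he).2
      · refine Finset.prod_pos fun e he => ?_
        rw [hlam0 e (Finset.mem_sdiff.mp he).2]
        norm_num
    have hid : ∀ u v : Fin N, Rrel E Tstar u v ↔ u = v := by
      intro u v
      constructor
      · rintro ⟨hb, hns⟩
        by_contra huv
        have h1 := hlt u v huv
        have h2 : phiBar E lam u v = 1 := by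
          rw [phiBar, if_pos hb]
          refine Finset.prod_eq_one fun e he => ?_
          have hsep := (Finset.mem_filter.mp he).2
          have : e ∉ Tstar := fun hT => hns e hT hsep
          rw [hlam0 e this]
          norm_num
        rw [h2] at h1
        exact lt_irrefl _ h1
      · rintro rfl
        exact Rrel_refl E Tstar u
    have hquad_pos : 0 < quad Tstar := by
      rw [hquad]
      simp only
      have : ∀ u : Fin N, ∑ v, x u * ((if Rrel E Tstar u v then (1:ℝ) else 0) * x v)
          = x u * x u := by
        intro u
        rw [Finset.sum_eq_single u]
        · rw [if_pos ((hid u u).mpr rfl), one_mul]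
        · intro v _ hvu
          rw [if_neg (fun h => hvu ((hid u v).mp h).symm), zero_mul, mul_zero]
        · intro h
          exact absurd (Finset.mem_univ u) h
      rw [Finset.sum_congr rfl fun u _ => this u]
      obtain ⟨u, hu⟩ := Function.ne_iff.mp hx0
      refine Finset.sum_pos' (fun i _ => mul_self_nonneg _) ⟨u, Finset.mem_univ u, ?_⟩
      exact mul_self_pos.mpr hu
    have hterm : ∀ T ∈ (Finset.univ : Finset {e // e ∈ E.splits}).powerset,
        0 ≤ coef T * quad T := by
      intro T _
      apply mul_nonneg
      · exact mul_nonneg (Finset.prod_nonneg fun e _ => (hmem e).1)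
          (Finset.prod_nonneg fun e _ => by linarith [(hmem e).2])
      · exact quad_nonneg E T x
    calc (0:ℝ) < coef Tstar * quad Tstar := mul_pos hcoef_pos hquad_pos
      _ ≤ _ := Finset.single_le_sum hterm
            (Finset.mem_powerset.mpr (Finset.subset_univ _))

end WaldAux

open Wald in
/-- Let `E` be a wald topology and `λ*` a boundary point of the
cube `[0,1]^E`. Then `φ̄_E(λ*)` is positive definite if and only if all its
off-diagonal entries are strictly less than `1`. -/
theorem stmt_19 {N : ℕ} (E : WaldTop N)
    (lam : {e // e ∈ E.splits} → ℝ)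
    (hmem : ∀ e, lam e ∈ Set.Icc (0:ℝ) 1)
    (hbdry : ∃ e, lam e = 0 ∨ lam e = 1) :
    (phiBar E lam).PosDef ↔
      ∀ u v : Fin N, u ≠ v → phiBar E lam u v < 1 :=
  WaldAux.main E lam hmem
end
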